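/- arXiv:1802.05252 — 2 statements merged into one kernel-verified Lean document; each statement's English description precedes it below -/
import Mathlib

section
/- Let M ≥ 0 and 0 ≤ c'' ≤ c' ≤ c be reals, with Δ = c − c'' and Δ' = c' − c''. Let t_k, t_m, y, y', y'' ∈ {0,1} and x, x', x'' ∈ ℝ≥0 satisfy: y'' ≤ t_k, y'' ≤ t_m, y' + y'' ≤ t_k + t_m, y + y' + y'' ≤ 1, x ≤ M·y, x' ≤ M·y', and x'' ≤ M·y''. Define θ = c·x + c'·x' + c''·x''. Then: (i) θ ≥ c''·(x + x' + x''); (ii) θ + Δ'·M·t_k ≥ c'·(x + x' + x''); (iii) θ + Δ'·M·t_m ≥ c'·(x + x' + x''); and (iv) θ + Δ·M·(t_k + t_m) ≥ c·(x + x' + x''). -/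
set_option maxHeartbeats 2000000


/-- The aggregated cost θ = c x + c' x' + c'' x'' built from a feasible solution of the
disaggregated formulation satisfies the cost constraints (teta1)-(teta3) of THLPU. -/
theorem theta_constraints (M c c' c'' : ℝ) (hM : 0 ≤ M)
    (hc'' : 0 ≤ c'') (h1 : c'' ≤ c') (h2 : c' ≤ c)
    (tk tm y y' y'' : ℝ)
    (htk : tk = 0 ∨ tk = 1) (htm : tm = 0 ∨ tm = 1)
    (hy : y = 0 ∨ y = 1) (hy' : y' = 0 ∨ y' = 1) (hy'' : y'' = 0 ∨ y'' = 1)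
    (hyk : y'' ≤ tk) (hym : y'' ≤ tm) (hy'k : y' + y'' ≤ tk + tm)
    (hsum : y + y' + y'' ≤ 1)
    (x x' x'' : ℝ) (hx0 : 0 ≤ x) (hx'0 : 0 ≤ x') (hx''0 : 0 ≤ x'')
    (hx : x ≤ M * y) (hx' : x' ≤ M * y') (hx'' : x'' ≤ M * y'') :
    c * x + c' * x' + c'' * x'' ≥ c'' * (x + x' + x'') ∧
    c * x + c' * x' + c'' * x'' + (c' - c'') * M * tk ≥ c' * (x + x' + x'') ∧
    c * x + c' * x' + c'' * x'' + (c' - c'') * M * tm ≥ c' * (x + x' + x'') ∧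
    c * x + c' * x' + c'' * x'' + (c - c'') * M * (tk + tm) ≥ c * (x + x' + x'') := by
  refine ⟨by nlinarith [mul_nonneg hc'' hx0, mul_nonneg hc'' hx'0], ?_, ?_, ?_⟩ <;>
  rcases htk with h|h <;> rcases htm with h'|h' <;> rcases hy with g|g <;>
  rcases hy' with g'|g' <;> rcases hy'' with g''|g'' <;> subst h h' g g' g'' <;>
  nlinarith [mul_nonneg hc'' hx0, mul_nonneg hc'' hx'0, mul_nonneg hc'' hx''0,
    mul_nonneg (sub_nonneg.2 h1) hM, mul_nonneg (sub_nonneg.2 h2) hM,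
    mul_nonneg (sub_nonneg.2 (h1.trans h2)) hM]
end

section
/- Let N be a finite set, w : N × N → ℝ≥0, and let T be a tree on N with hub set H inducing a subtree and spokes as leaves. For a fixed origin i ∈ N and each ordered pair of adjacent hubs (k,m) in T, let r_{ikm} = ∑_{j ∈ C_m(k,m)} w_{ij} if the path from i to the component C_m(k,m) (the component of T − {k,m} containing m) enters through k, and 0 otherwise. Then for every hub k ∈ H, flow conservation holds: [O_i if i's hub is k, else 0] + ∑_{m adjacent hub} r_{imk} = ∑_{m adjacent hub} r_{ikm} + ∑_{j allocated to k} w_{ij}, where O_i = ∑_{j ∈ N} w_{ij} and 'j allocated to k' means j = k or j is a spoke adjacent to k. -/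
/-!
Deleting a tree edge `km` splits the vertices into the side of `k` and the side of `m`. For a hub
`k`, the sides of its hub neighbours `m`, together with the vertices allocated to `k`, partition
`N`: a spoke neighbour of `k` is cut off alone, since its only edge leads to `k`. So if `i` is
allocated to `k`, all of `O_i` leaves `k`, once over each arc `km` and once to the local
destinations. Otherwise `i` lies on the side of exactly one hub neighbour `m₀`; the only inflow is
then over `m₀k`, carrying everything outside that side, which is exactly what `k` sends on over
the other arcs or delivers.
-/

open scoped Classical

/-- The flow with origin i traversing arc (k,m) between adjacent hubs when routing along
tree paths: if i is not on m's side of edge {k,m}, all flow to the component of m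
crosses from k to m. -/
noncomputable def rflow {N : Type*} [Fintype N] (T : SimpleGraph N) (w : N → N → ℝ)
    (i k m : N) : ℝ :=
  if ¬ (T.deleteEdges {s(k, m)}).Reachable i m then
    ∑ j ∈ Finset.univ.filter (fun j => (T.deleteEdges {s(k, m)}).Reachable j m), w i j
  else 0

namespace SimpleGraph

variable {V : Type*} {G : SimpleGraph V} {j k m : V}

theorem IsAcyclic.not_reachable_deleteEdges_of_adj (hG : G.IsAcyclic) (h : G.Adj k m) :
    ¬ (G.deleteEdges {s(k, m)}).Reachable k m :=
  isBridge_iff.mp (isAcyclic_iff_forall_adj_isBridge.mp hG h)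

theorem IsAcyclic.not_reachable_deleteEdges_of_reachable (hG : G.IsAcyclic) (h : G.Adj k m)
    (hj : (G.deleteEdges {s(k, m)}).Reachable j k) : ¬ (G.deleteEdges {s(k, m)}).Reachable j m :=
  fun hjm => hG.not_reachable_deleteEdges_of_adj h (hj.symm.trans hjm)

theorem Connected.reachable_deleteEdges_or (hG : G.Connected) (k m j : V) :
    (G.deleteEdges {s(k, m)}).Reachable j k ∨ (G.deleteEdges {s(k, m)}).Reachable j m := by
  obtain ⟨p⟩ := hG.preconnected j k
  suffices ∀ {a b} (q : G.Walk a b),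
      ((G.deleteEdges {s(k, m)}).Reachable b k ∨ (G.deleteEdges {s(k, m)}).Reachable b m) →
      (G.deleteEdges {s(k, m)}).Reachable a k ∨ (G.deleteEdges {s(k, m)}).Reachable a m from
    this p (Or.inl .rfl)
  intro a b q
  induction q with
  | nil => exact id
  | @cons a c _ h _ ih =>
    intro hb
    by_cases he : s(a, c) = s(k, m)
    · rcases Sym2.eq_iff.mp he with ⟨rfl, -⟩ | ⟨rfl, -⟩
      exacts [Or.inl .rfl, Or.inr .rfl]
    · have hac : (G.deleteEdges {s(k, m)}).Adj a c := deleteEdges_adj.mpr ⟨h, he⟩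
      exact (ih hb).imp hac.reachable.trans hac.reachable.trans

theorem IsTree.reachable_deleteEdges_iff (hG : G.IsTree) (h : G.Adj k m) :
    (G.deleteEdges {s(k, m)}).Reachable j k ↔ ¬ (G.deleteEdges {s(k, m)}).Reachable j m :=
  ⟨hG.isAcyclic.not_reachable_deleteEdges_of_reachable h,
    (hG.connected.reachable_deleteEdges_or k m j).resolve_right⟩

/-- A walk to `m` that avoids the bridge `km` never visits `k`, so it also avoids every other
edge at `k`. -/
theorem IsAcyclic.reachable_deleteEdges_of_reachable_deleteEdges {m' : V} (hG : G.IsAcyclic)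
    (hm : G.Adj k m) (hne : m ≠ m')
    (hj : (G.deleteEdges {s(k, m)}).Reachable j m) : (G.deleteEdges {s(k, m')}).Reachable j k := by
  obtain ⟨p⟩ := hj
  have hk : k ∉ p.support := fun hk => hG.not_reachable_deleteEdges_of_adj hm ⟨p.dropUntil k hk⟩
  have hjm : (G.deleteEdges {s(k, m')}).Reachable j m := by
    refine ⟨p.transfer _ fun e he => ?_⟩
    rw [edgeSet_deleteEdges]
    refine ⟨edgeSet_mono (deleteEdges_le _) (p.edges_subset_edgeSet he), ?_⟩
    rintro rfl
    exact hk (p.fst_mem_support_of_mem_edges he)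
  have hmk : (G.deleteEdges {s(k, m')}).Adj m k :=
    deleteEdges_adj.mpr ⟨hm.symm, by simp [hm.ne.symm, hne]⟩
  exact hjm.trans hmk.reachable

theorem Connected.exists_adj_reachable_deleteEdges (hG : G.Connected) (hjk : j ≠ k) :
    ∃ m, G.Adj k m ∧ (G.deleteEdges {s(k, m)}).Reachable j m := by
  obtain ⟨p, hp⟩ := hG.exists_isPath k j
  cases p with
  | nil => exact absurd rfl hjk
  | @cons _ m _ h q =>
    rw [Walk.cons_isPath_iff] at hp
    refine ⟨m, h, Reachable.symm ⟨q.toDeleteEdges _ fun e he => ?_⟩⟩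
    rintro rfl
    exact hp.2 (q.fst_mem_support_of_mem_edges he)

theorem eq_of_reachable_deleteEdges_of_forall_adj (hm : ∀ x, G.Adj m x → x = k)
    (hj : (G.deleteEdges {s(k, m)}).Reachable j m) : j = m := by
  obtain ⟨p⟩ := hj.symm
  cases p with
  | nil => rfl
  | @cons _ x _ h _ =>
    obtain ⟨hmx, hne⟩ := deleteEdges_adj.mp h
    obtain rfl := hm x hmx
    exact absurd Sym2.eq_swap hne

end SimpleGraph

open Finset

/-- Conservation at a node whose incident arcs `m ∈ M` cut off the sides `S m`, the remaining
vertices `A` being served by the node itself. -/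
theorem sum_flow_balance {ι N : Type*} [Fintype N] (M : Finset ι) (A : N → Prop)
    (S : ι → N → Prop) [DecidablePred A] [∀ m, DecidablePred (S m)] (f : N → ℝ)
    (hdisj : ∀ m ∈ M, ∀ m' ∈ M, m ≠ m' → ∀ j, S m j → ¬ S m' j)
    (hA : ∀ m ∈ M, ∀ j, A j → ¬ S m j) (hcover : ∀ j, ¬ A j → ∃ m ∈ M, S m j) (i : N) :
    (if A i then ∑ j, f j else 0)
      + ∑ m ∈ M, (if S m i then ∑ j ∈ univ.filter (fun j => ¬ S m j), f j else 0)
    = ∑ m ∈ M, (if ¬ S m i then ∑ j ∈ univ.filter (S m), f j else 0)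
      + ∑ j ∈ univ.filter A, f j := by
  have hpart : ∑ m ∈ M, ∑ j ∈ univ.filter (S m), f j + ∑ j ∈ univ.filter A, f j = ∑ j, f j := by
    have hpd : (M : Set ι).PairwiseDisjoint fun m => univ.filter (S m) :=
      fun m hm m' hm' hne => disjoint_filter.mpr fun j _ => hdisj m hm m' hm' hne j
    have hdA : Disjoint (M.biUnion fun m => univ.filter (S m)) (univ.filter A) := by
      simp only [disjoint_left, mem_biUnion, mem_filter, mem_univ, true_and]
      rintro j ⟨m, hm, hj⟩ hjA
      exact hA m hm j hjA hj
    have hU : (M.biUnion fun m => univ.filter (S m)) ∪ univ.filter A = univ :=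
      eq_univ_of_forall fun j => by
        by_cases hj : A j
        · simp [hj]
        · simpa [hj] using hcover j hj
    rw [← sum_biUnion hpd, ← sum_union hdA, hU]
  by_cases hi : A i
  · have hnS : ∀ m ∈ M, ¬ S m i := fun m hm => hA m hm i hi
    rw [if_pos hi, sum_congr rfl fun m hm => if_neg (hnS m hm),
      sum_congr rfl fun m hm => if_pos (hnS m hm), sum_const_zero, add_zero, hpart]
  · obtain ⟨m₀, hm₀, hi₀⟩ := hcover i hi
    have hS : ∀ m ∈ M, S m i ↔ m = m₀ :=
      fun m hm => ⟨fun h => by_contra fun hne => hdisj m hm m₀ hm₀ hne i h hi₀,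
        by rintro rfl; exact hi₀⟩
    have hO := sum_filter_add_sum_filter_not univ (S m₀) f
    rw [if_neg hi, sum_eq_single_of_mem m₀ hm₀ fun m hm hne => if_neg ((hS m hm).not.mpr hne),
      if_pos hi₀]
    have hR : ∑ m ∈ M, (if ¬ S m i then ∑ j ∈ univ.filter (S m), f j else 0)
        = ∑ m ∈ M.erase m₀, ∑ j ∈ univ.filter (S m), f j := by
      rw [← sum_filter]
      refine sum_congr (ext fun m => ?_) fun _ _ => rfl
      by_cases hm : m ∈ M <;> simp [hm, hS, and_comm]
    linarith [sum_erase_add M (fun m => ∑ j ∈ univ.filter (S m), f j) hm₀]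

open SimpleGraph

theorem rflow_swap {N : Type*} [Fintype N] {T : SimpleGraph N} (hT : T.IsTree) (w : N → N → ℝ)
    (i : N) {k m : N} (h : T.Adj k m) :
    rflow T w i m k = if (T.deleteEdges {s(k, m)}).Reachable i m then
      ∑ j ∈ univ.filter (fun j => ¬ (T.deleteEdges {s(k, m)}).Reachable j m), w i j else 0 := by
  simp only [rflow, Sym2.eq_swap, hT.reachable_deleteEdges_iff h, not_not]

theorem flow_conservation_general {N : Type*} [Fintype N] (T : SimpleGraph N) (hT : T.IsTree)
    (H : Set N)
    (hleaf1 : ∀ v ∉ H, ∃! h : N, T.Adj v h)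
    (w : N → N → ℝ)
    (i k : N) :
    (if i = k ∨ (i ∉ H ∧ T.Adj i k) then ∑ j, w i j else 0)
      + ∑ m ∈ Finset.univ.filter (fun m => m ∈ H ∧ T.Adj k m), rflow T w i m k
    = (∑ m ∈ Finset.univ.filter (fun m => m ∈ H ∧ T.Adj k m), rflow T w i k m)
      + ∑ j ∈ Finset.univ.filter (fun j => j = k ∨ (j ∉ H ∧ T.Adj j k)), w i j := by
  rw [sum_congr rfl fun m hm => rflow_swap hT w i (mem_filter.mp hm).2.2]
  refine sum_flow_balance _ (fun j => j = k ∨ (j ∉ H ∧ T.Adj j k))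
    (fun m j => (T.deleteEdges {s(k, m)}).Reachable j m) (w i) ?disjoint ?allocated ?cover i
  case disjoint =>
    intro m hm m' hm' hne j hj
    exact (hT.reachable_deleteEdges_iff (mem_filter.mp hm').2.2).mp
      (hT.isAcyclic.reachable_deleteEdges_of_reachable_deleteEdges (mem_filter.mp hm).2.2 hne hj)
  case allocated =>
    rintro m hm j (rfl | ⟨hjH, hjk⟩)
    · exact hT.isAcyclic.not_reachable_deleteEdges_of_adj (mem_filter.mp hm).2.2
    · have hjm : j ≠ m := fun h => hjH (h ▸ (mem_filter.mp hm).2.1)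
      refine hT.isAcyclic.not_reachable_deleteEdges_of_reachable (mem_filter.mp hm).2.2
        (deleteEdges_adj.mpr ⟨hjk, ?_⟩).reachable
      simp [hjm, hjk.ne]
  case cover =>
    intro j hj
    obtain ⟨hjk, hspoke⟩ := not_or.mp hj
    obtain ⟨m, hkm, hjm⟩ := hT.connected.exists_adj_reachable_deleteEdges hjk
    refine ⟨m, mem_filter.mpr ⟨mem_univ _, by_contra fun hmH => ?_, hkm⟩, hjm⟩
    obtain ⟨_, -, huniq⟩ := hleaf1 m hmH
    obtain rfl := eq_of_reachable_deleteEdges_of_forall_adj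
      (fun x hx => (huniq x hx).trans (huniq k hkm.symm).symm) hjm
    exact hspoke ⟨hmH, hkm.symm⟩

/-- Flow conservation at each hub k for the flow with origin i routed along tree paths. -/
theorem flow_conservation {N : Type*} [Fintype N] (T : SimpleGraph N) (hT : T.IsTree)
    (H : Set N) (hconn : (T.induce H).Connected)
    (hleaf1 : ∀ v ∉ H, ∃! h : N, T.Adj v h)
    (hleaf2 : ∀ v ∉ H, ∀ h : N, T.Adj v h → h ∈ H)
    (w : N → N → ℝ) (hw : ∀ a b, 0 ≤ w a b)
    (i k : N) (hk : k ∈ H) :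
    (if i = k ∨ (i ∉ H ∧ T.Adj i k) then ∑ j, w i j else 0)
      + ∑ m ∈ Finset.univ.filter (fun m => m ∈ H ∧ T.Adj k m), rflow T w i m k
    = (∑ m ∈ Finset.univ.filter (fun m => m ∈ H ∧ T.Adj k m), rflow T w i k m)
      + ∑ j ∈ Finset.univ.filter (fun j => j = k ∨ (j ∉ H ∧ T.Adj j k)), w i j :=
  flow_conservation_general T hT H hleaf1 w i k
end
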